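/- Let 0 < ε < 1, r ≥ 1 an integer and c > 0 be constants. There exists a constant c' (depending only on r, c and ε) such that the following holds for all sufficiently large n. Let v = (v₁,…,v_{n−1}) ∈ ℝ^{n−1} be a nonzero vector such that all but at most n^ε of its coordinates belong to a proper symmetric GAP of rank at most r and size at most n^c, and suppose v is orthogonal to n−2 linearly independent vectors w₁,…,w_{n−2} ∈ ℤ^{n−1} all of whose entries have absolute value at most n^c. Then there exists an index i₀ such that every coordinate satisfies v_i = (p/q)·v_{i₀} for some integers p, q with q ≠ 0 and |p|, |q| ≤ n^{c'·n^ε}. -/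

import Mathlib

open scoped Classical BigOperators

noncomputable section


/-- `Q` is a proper symmetric generalized arithmetic progression (GAP) of rank at most `r`
and size at most `s`. -/
def IsProperSymGAPSet (Q : Set ℝ) (r : ℕ) (s : ℝ) : Prop :=
  ∃ (r' : ℕ) (g : Fin r' → ℝ) (N : Fin r' → ℕ),
    r' ≤ r ∧
    Q = {x : ℝ | ∃ m : Fin r' → ℤ, (∀ i, |m i| ≤ (N i : ℤ)) ∧ x = ∑ i, (m i : ℝ) * g i} ∧
    (∀ m m' : Fin r' → ℤ, (∀ i, |m i| ≤ (N i : ℤ)) → (∀ i, |m' i| ≤ (N i : ℤ)) →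
      (∑ i, (m i : ℝ) * g i) = (∑ i, (m' i : ℝ) * g i) → m = m') ∧
    (∏ i, (2 * (N i : ℝ) + 1)) ≤ s

open Finset Matrix

namespace RatComm

set_option linter.unusedSectionVars false
set_option linter.unusedVariables false
set_option maxHeartbeats 1000000

variable {ι κ : Type*} [Fintype ι] [Fintype κ]

lemma exists_spanning_rows (C : Matrix ι κ ℝ) :
    ∃ (ρ : ℕ) (rows : Fin ρ → ι),
      LinearIndependent ℝ (fun i => C (rows i)) ∧
      ∀ k, C k ∈ Submodule.span ℝ (Set.range fun i => C (rows i)) := by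
  obtain ⟨s, hsub, hspan, hind⟩ := exists_linearIndependent ℝ (Set.range fun k => C k)
  have hfin : s.Finite := (Set.finite_range _).subset hsub
  haveI := hfin.fintype
  set ρ := Fintype.card s with hρ
  let e : Fin ρ ≃ s := (Fintype.equivFin s).symm
  have hpre : ∀ i : Fin ρ, ∃ k, C k = (e i : κ → ℝ) := fun i => hsub (e i).2
  choose rows hrows using hpre
  refine ⟨ρ, rows, ?_, ?_⟩
  · have h1 : (fun i => C (rows i)) = (fun x : s => (x : κ → ℝ)) ∘ e := by
      funext i; simp [hrows i]
    rw [h1]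
    exact hind.comp e e.injective
  · intro k
    have hr : (Set.range fun i => C (rows i)) = s := by
      ext x; constructor
      · rintro ⟨i, rfl⟩; simp only; rw [hrows i]; exact (e i).2
      · intro hx; exact ⟨e.symm ⟨x, hx⟩, by simp only; rw [hrows]; simp⟩
    rw [hr, hspan]
    exact Submodule.subset_span ⟨k, rfl⟩


lemma exists_cols_det_ne_zero {ρ : ℕ} (C : Matrix (Fin ρ) κ ℝ)
    (hC : LinearIndependent ℝ (fun i => C i)) :
    ∃ cols : Fin ρ → κ, Function.Injective cols ∧ (C.submatrix id cols).det ≠ 0 := by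
  classical
  have hrankT : Cᵀ.rank = ρ := by
    rw [Matrix.rank_eq_finrank_span_cols, Matrix.col, Matrix.transpose_transpose]
    rw [finrank_span_eq_card hC, Fintype.card_fin]
  have hrank : C.rank = ρ := by rw [← Matrix.rank_transpose, hrankT]
  have hspanTop : Submodule.span ℝ (Set.range Cᵀ) = ⊤ := by
    apply Submodule.eq_top_of_finrank_eq
    rw [show Cᵀ = C.col from rfl, ← Matrix.rank_eq_finrank_span_cols, hrank]
    simp [Module.finrank_pi]
  obtain ⟨s, hsub, hspan, hind⟩ := exists_linearIndependent ℝ (Set.range Cᵀ)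
  rw [hspanTop] at hspan
  have hfin : s.Finite := (Set.finite_range _).subset hsub
  haveI := hfin.fintype
  have hcard : Fintype.card s = ρ := by
    have h1 : Submodule.span ℝ (Set.range ((↑) : s → (Fin ρ → ℝ))) = ⊤ := by
      rw [Subtype.range_coe]; exact hspan
    have := finrank_span_eq_card hind
    rw [h1, finrank_top] at this
    simpa [Module.finrank_pi] using this.symm
  let e : Fin ρ ≃ s := (Fintype.equivFinOfCardEq hcard).symm
  have hpre : ∀ i : Fin ρ, ∃ u : κ, Cᵀ u = (e i : Fin ρ → ℝ) := fun i => hsub (e i).2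
  choose cols hcols using hpre
  have hinj : Function.Injective cols := by
    intro i j hij
    have : (e i : Fin ρ → ℝ) = (e j : Fin ρ → ℝ) := by rw [← hcols i, ← hcols j, hij]
    exact e.injective (Subtype.ext this)
  refine ⟨cols, hinj, ?_⟩
  set A := C.submatrix id cols with hA
  have hcolind : LinearIndependent ℝ (fun j => fun i => A i j) := by
    have h1 : (fun j => fun i => A i j) = (fun x : s => (x : Fin ρ → ℝ)) ∘ e := by
      funext j; simp only [Function.comp]
      rw [← hcols j]; rfl
    rw [h1]
    exact hind.comp e e.injective
  intro hdet
  obtain ⟨u, hu0, hu⟩ := Matrix.exists_mulVec_eq_zero_iff.mpr hdet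
  apply hu0
  have := Fintype.linearIndependent_iff.mp hcolind u ?_
  · funext j; exact this j
  · funext i
    have : (A *ᵥ u) i = 0 := by rw [hu]; rfl
    simpa [Matrix.mulVec, dotProduct, Finset.sum_apply, mul_comm] using this

lemma key [DecidableEq κ] (B : Matrix ι κ ℤ) (x : κ → ℝ) (ψ : κ → ℤ) (E : ℝ) (hE : 1 ≤ E)
    (hent : ∀ i j, |(B i j : ℝ)| ≤ E)
    (hx : ∀ i, ∑ u, (B i u : ℝ) * x u = 0)
    (hψ : ∑ u, (ψ u : ℝ) * x u ≠ 0) :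
    ∃ y : κ → ℤ, (∀ i, ∑ u, (B i u : ℝ) * (y u : ℝ) = 0) ∧
      (∑ u, (ψ u : ℝ) * (y u : ℝ)) ≠ 0 ∧
      ∀ u, |(y u : ℝ)| ≤ ((Fintype.card κ + 2).factorial : ℝ) *
        E ^ (Fintype.card κ + 2) := by
  classical
  have hE0 : (0:ℝ) ≤ E := le_trans zero_le_one hE
  set d := Fintype.card κ with hd
  set Bℝ : Matrix ι κ ℝ := Matrix.of fun i u => (B i u : ℝ) with hBℝ
  obtain ⟨ρ, rows, hind, hspan⟩ := exists_spanning_rows Bℝ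
  have hρd : ρ ≤ d := by
    have := hind.fintype_card_le_finrank
    simpa [hd] using this
  obtain ⟨cols, hcolinj, hdet⟩ := exists_cols_det_ne_zero (Bℝ.submatrix rows id) hind
  rw [Matrix.submatrix_submatrix, Function.comp_id, Function.id_comp] at hdet
  set A : Matrix (Fin ρ) (Fin ρ) ℤ := B.submatrix rows cols with hA
  have hAmap : Bℝ.submatrix rows cols = (Int.castRingHom ℝ).mapMatrix A := by
    ext i j'; rfl
  have hdetcast : ((A.det : ℤ) : ℝ) = (Bℝ.submatrix rows cols).det := by
    rw [hAmap, ← RingHom.map_det]; rfl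
  have hdetA : ((A.det : ℤ) : ℝ) ≠ 0 := by rw [hdetcast]; exact hdet
  set b : κ → Fin ρ → ℤ := fun j i => B (rows i) j with hb
  set z : κ → Fin ρ → ℤ := fun j => A.adjugate *ᵥ (b j) with hz
  set Y : κ → κ → ℤ := fun j u =>
    (if u = j then A.det else 0) - ∑ i, (if cols i = u then z j i else 0) with hY
  -- integer kernel identities on selected rows
  have intker : ∀ (j : κ) (i₀ : Fin ρ), ∑ u, B (rows i₀) u * Y j u = 0 := by
    intro j i₀
    have h1 : ∑ u, B (rows i₀) u * (if u = j then A.det else 0)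
        = A.det * B (rows i₀) j := by
      simp [mul_ite, Finset.sum_ite_eq']
      ring
    have h2 : ∑ u, B (rows i₀) u * ∑ i, (if cols i = u then z j i else 0)
        = ∑ i, A i₀ i * z j i := by
      calc ∑ u, B (rows i₀) u * ∑ i, (if cols i = u then z j i else 0)
          = ∑ u, ∑ i, (if cols i = u then B (rows i₀) u * z j i else 0) := by
            refine Finset.sum_congr rfl fun u _ => ?_
            rw [Finset.mul_sum]
            exact Finset.sum_congr rfl fun i _ => by rw [mul_ite, mul_zero]
        _ = ∑ i, ∑ u, (if cols i = u then B (rows i₀) u * z j i else 0) :=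
            Finset.sum_comm
        _ = ∑ i, A i₀ i * z j i := by
            refine Finset.sum_congr rfl fun i _ => ?_
            rw [Finset.sum_ite_eq Finset.univ (cols i)
              (fun u => B (rows i₀) u * z j i)]
            simp [hA]
    have expand : ∑ u, B (rows i₀) u * Y j u
        = A.det * B (rows i₀) j - ∑ i, A i₀ i * z j i := by
      rw [← h1, ← h2, ← Finset.sum_sub_distrib]
      refine Finset.sum_congr rfl fun u _ => ?_
      simp only [hY]; ring
    rw [expand]
    have h3 : A *ᵥ (z j) = A.det • (b j) := by
      rw [hz, Matrix.mulVec_mulVec, Matrix.mul_adjugate, Matrix.smul_mulVec,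
        Matrix.one_mulVec]
    have h4 : ∑ i, A i₀ i * z j i = A.det * b j i₀ := by
      have := congrFun h3 i₀
      simpa [Matrix.mulVec, dotProduct] using this
    rw [h4]; simp [hb]
  have realker : ∀ (j : κ) (k : ι), ∑ u, (B k u : ℝ) * (Y j u : ℝ) = 0 := by
    intro j k
    have hrowker : ∀ i : Fin ρ, ∑ u, (B (rows i) u : ℝ) * (Y j u : ℝ) = 0 := by
      intro i
      have h := congrArg (fun t : ℤ => (t : ℝ)) (intker j i)
      push_cast at h
      simpa using h
    obtain ⟨cf, hcf⟩ := (Submodule.mem_span_range_iff_exists_fun ℝ).mp (hspan k)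
    have hrow : ∀ u, (B k u : ℝ) = ∑ i, cf i * (B (rows i) u : ℝ) := by
      intro u
      have := congrFun hcf u
      simpa [Finset.sum_apply, hBℝ] using this.symm
    calc ∑ u, (B k u : ℝ) * (Y j u : ℝ)
        = ∑ u, ∑ i, cf i * ((B (rows i) u : ℝ) * (Y j u : ℝ)) := by
          refine Finset.sum_congr rfl fun u _ => ?_
          rw [hrow u, Finset.sum_mul]
          exact Finset.sum_congr rfl fun i _ => by ring
      _ = ∑ i, cf i * ∑ u, (B (rows i) u : ℝ) * (Y j u : ℝ) := by
          rw [Finset.sum_comm]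
          exact Finset.sum_congr rfl fun i _ => by rw [Finset.mul_sum]
      _ = 0 := by simp [hrowker]
  set Dif : κ → ℝ := fun u => (A.det : ℝ) * x u - ∑ j, x j * (Y j u : ℝ) with hDif
  have hDifnotin : ∀ u, (¬ ∃ i, cols i = u) → Dif u = 0 := by
    intro u hu
    have hYu : ∀ j, (Y j u : ℝ) = if u = j then (A.det : ℝ) else 0 := by
      intro j
      have h0 : ∑ i, (if cols i = u then z j i else 0) = 0 :=
        Finset.sum_eq_zero fun i _ => if_neg fun h => hu ⟨i, h⟩
      simp only [hY, h0, sub_zero]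
      split <;> simp
    have hsum : ∑ j, x j * (Y j u : ℝ) = x u * (A.det : ℝ) := by
      calc ∑ j, x j * (Y j u : ℝ)
          = ∑ j, (if u = j then x j * (A.det:ℝ) else 0) := by
            refine Finset.sum_congr rfl fun j _ => ?_
            rw [hYu j, mul_ite, mul_zero]
        _ = x u * (A.det : ℝ) := by rw [Finset.sum_ite_eq]; simp
    simp only [hDif, hsum]; ring
  have hDifker : ∀ k : ι, ∑ u, (B k u : ℝ) * Dif u = 0 := by
    intro k
    have expand : ∑ u, (B k u : ℝ) * Dif u
        = (A.det : ℝ) * (∑ u, (B k u : ℝ) * x u)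
          - ∑ j, x j * (∑ u, (B k u : ℝ) * (Y j u : ℝ)) := by
      calc ∑ u, (B k u : ℝ) * Dif u
          = ∑ u, ((A.det:ℝ) * ((B k u:ℝ) * x u)
              - ∑ j, x j * ((B k u:ℝ) * (Y j u : ℝ))) := by
            refine Finset.sum_congr rfl fun u _ => ?_
            simp only [hDif]
            rw [mul_sub, Finset.mul_sum]
            congr 1
            · ring
            · exact Finset.sum_congr rfl fun j _ => by ring
        _ = _ := by
            rw [Finset.sum_sub_distrib, ← Finset.mul_sum, Finset.sum_comm]
            congr 1
            exact Finset.sum_congr rfl fun j _ => (Finset.mul_sum _ _ _).symm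
    rw [expand, hx k]
    simp [realker]
  have hDifcols : ∀ i : Fin ρ, Dif (cols i) = 0 := by
    by_contra hcon
    push_neg at hcon
    have hvec : (Bℝ.submatrix rows cols) *ᵥ (fun i => Dif (cols i)) = 0 := by
      funext i₀
      have hsplit : ∑ u, (B (rows i₀) u : ℝ) * Dif u
          = ∑ u ∈ Finset.univ.image cols, (B (rows i₀) u : ℝ) * Dif u := by
        symm
        apply Finset.sum_subset (Finset.subset_univ _)
        intro u _ hu
        have hne : ¬ ∃ i, cols i = u := by
          rintro ⟨i, hi⟩
          exact hu (Finset.mem_image.mpr ⟨i, Finset.mem_univ i, hi⟩)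
        rw [hDifnotin u hne, mul_zero]
      have himg : ∑ u ∈ Finset.univ.image cols, (B (rows i₀) u : ℝ) * Dif u
          = ∑ i, (B (rows i₀) (cols i) : ℝ) * Dif (cols i) := by
        rw [Finset.sum_image (fun a _ b _ h => hcolinj h)]
      have h := hDifker (rows i₀)
      rw [hsplit, himg] at h
      simpa [Matrix.mulVec, dotProduct, hBℝ] using h
    obtain ⟨i, hi⟩ := hcon
    exact hdet (Matrix.exists_mulVec_eq_zero_iff.mp
      ⟨_, fun h => hi (congrFun h i), hvec⟩)
  have hDifall : ∀ u, Dif u = 0 := by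
    intro u
    by_cases h : ∃ i, cols i = u
    · obtain ⟨i, rfl⟩ := h; exact hDifcols i
    · exact hDifnotin u h
  have hid : ∀ u, (A.det : ℝ) * x u = ∑ j, x j * (Y j u : ℝ) := by
    intro u
    have h := hDifall u
    simp only [hDif] at h
    linarith
  have hmain : (A.det:ℝ) * ∑ u, (ψ u:ℝ) * x u
      = ∑ j, x j * ∑ u, (ψ u : ℝ) * (Y j u : ℝ) := by
    calc (A.det:ℝ) * ∑ u, (ψ u:ℝ) * x u
        = ∑ u, (ψ u:ℝ) * ((A.det:ℝ) * x u) := by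
          rw [Finset.mul_sum]; exact Finset.sum_congr rfl fun u _ => by ring
      _ = ∑ u, (ψ u:ℝ) * ∑ j, x j * (Y j u : ℝ) :=
          Finset.sum_congr rfl fun u _ => by rw [hid u]
      _ = ∑ u, ∑ j, x j * ((ψ u:ℝ) * (Y j u:ℝ)) := by
          refine Finset.sum_congr rfl fun u _ => ?_
          rw [Finset.mul_sum]; exact Finset.sum_congr rfl fun j _ => by ring
      _ = ∑ j, x j * ∑ u, (ψ u:ℝ) * (Y j u:ℝ) := by
          rw [Finset.sum_comm]
          exact Finset.sum_congr rfl fun j _ => by rw [Finset.mul_sum]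
  have hex : ∃ j, ∑ u, (ψ u : ℝ) * (Y j u : ℝ) ≠ 0 := by
    by_contra hall
    push_neg at hall
    apply mul_ne_zero hdetA hψ
    rw [hmain]
    exact Finset.sum_eq_zero fun j _ => by rw [hall j, mul_zero]
  obtain ⟨j, hj⟩ := hex
  -- bounds
  have habs : ∀ (M : Matrix (Fin ρ) (Fin ρ) ℝ), (∀ i j', |M i j'| ≤ E) →
      |M.det| ≤ (ρ.factorial : ℝ) * E ^ ρ := by
    intro M hM
    have h := Matrix.det_le (A := M) (abv := AbsoluteValue.abs) (x := E)
      (fun i j' => hM i j')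
    simpa [nsmul_eq_mul, Fintype.card_fin] using h
  set F : ℝ := (ρ.factorial : ℝ) * E ^ ρ with hF
  have hF0 : (0:ℝ) ≤ F := mul_nonneg (Nat.cast_nonneg _) (pow_nonneg hE0 _)
  have hdetbound : |(A.det : ℝ)| ≤ F := by
    rw [hdetcast]
    apply habs
    intro i j'
    exact hent (rows i) (cols j')
  have hadjbound : ∀ i j', |(A.adjugate i j' : ℝ)| ≤ F := by
    intro i j'
    have hmapadj : ((A.adjugate i j' : ℤ) : ℝ)
        = (Bℝ.submatrix rows cols).adjugate i j' := by
      rw [hAmap, ← RingHom.map_adjugate]; rfl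
    rw [hmapadj, Matrix.adjugate_apply]
    apply habs
    intro i' u'
    rw [Matrix.updateRow_apply]
    split
    · rcases eq_or_ne u' i with h | h
      · rw [h, Pi.single_eq_same]
        simpa using hE
      · rw [Pi.single_eq_of_ne h]
        simpa using hE0
    · exact hent _ _
  have hzbound : ∀ i, |(z j i : ℝ)| ≤ (ρ:ℝ) * (F * E) := by
    intro i
    have h1 : z j i = ∑ i', A.adjugate i i' * B (rows i') j := by
      simp [hz, Matrix.mulVec, dotProduct, hb]
    calc |(z j i : ℝ)| = |∑ i', (A.adjugate i i' : ℝ) * (B (rows i') j : ℝ)| := by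
          rw [h1]; push_cast; ring_nf
      _ ≤ ∑ i', |(A.adjugate i i' : ℝ) * (B (rows i') j : ℝ)| :=
          Finset.abs_sum_le_sum_abs _ _
      _ ≤ ∑ _i' : Fin ρ, F * E := by
          refine Finset.sum_le_sum fun i' _ => ?_
          rw [abs_mul]
          exact mul_le_mul (hadjbound _ _) (hent _ _) (abs_nonneg _) hF0
      _ = (ρ:ℝ) * (F * E) := by
          rw [Finset.sum_const, Finset.card_univ, Fintype.card_fin, nsmul_eq_mul]
  have hYbound : ∀ u, |(Y j u : ℝ)| ≤ ((d + 2).factorial : ℝ) * E ^ (d + 2) := by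
    intro u
    have hcast : (Y j u : ℝ) = (if u = j then (A.det:ℝ) else 0)
        - ∑ i, (if cols i = u then (z j i : ℝ) else 0) := by
      simp only [hY, Int.cast_sub, Int.cast_sum, apply_ite (Int.cast : ℤ → ℝ),
        Int.cast_zero]
    have h1 : |if u = j then (A.det:ℝ) else 0| ≤ F := by
      split
      · exact hdetbound
      · simpa using hF0
    have h2 : |∑ i, (if cols i = u then (z j i : ℝ) else 0)|
        ≤ (ρ:ℝ) * ((ρ:ℝ) * (F * E)) := by
      refine (Finset.abs_sum_le_sum_abs _ _).trans ?_
      have hterm : ∀ i : Fin ρ, |if cols i = u then (z j i : ℝ) else 0|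
          ≤ (ρ:ℝ)*(F*E) := by
        intro i
        split
        · exact hzbound i
        · simpa using mul_nonneg (Nat.cast_nonneg ρ) (mul_nonneg hF0 hE0)
      calc ∑ i, |if cols i = u then (z j i : ℝ) else 0|
          ≤ ∑ _i : Fin ρ, (ρ:ℝ)*(F*E) := Finset.sum_le_sum fun i _ => hterm i
        _ = (ρ:ℝ) * ((ρ:ℝ)*(F*E)) := by
            rw [Finset.sum_const, Finset.card_univ, Fintype.card_fin, nsmul_eq_mul]
    have hfinal : F + (ρ:ℝ) * ((ρ:ℝ) * (F * E))
        ≤ ((d+2).factorial : ℝ) * E ^ (d + 2) := by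
      have e2 : (1:ℝ) + (ρ:ℝ)^2 * E ≤ ((ρ:ℝ)+1)*(((ρ:ℝ))+2)*E := by
        nlinarith [hE, sq_nonneg ((ρ:ℝ)), (Nat.cast_nonneg ρ : (0:ℝ) ≤ (ρ:ℝ))]
      calc F + (ρ:ℝ)*((ρ:ℝ)*(F*E))
          = (ρ.factorial:ℝ) * ((1:ℝ) + (ρ:ℝ)^2 * E) * E^ρ := by rw [hF]; ring
        _ ≤ (ρ.factorial:ℝ) * (((ρ:ℝ)+1)*(((ρ:ℝ))+2)*E) * E^ρ := by
            apply mul_le_mul_of_nonneg_right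
              (mul_le_mul_of_nonneg_left e2 (Nat.cast_nonneg _)) (pow_nonneg hE0 _)
        _ = ((ρ+2).factorial : ℝ) * E^(ρ+1) := by
            have hfac : ((ρ+2).factorial : ℝ)
                = ((ρ:ℝ)+2)*((ρ:ℝ)+1)*(ρ.factorial:ℝ) := by
              rw [Nat.factorial_succ, Nat.factorial_succ]; push_cast; ring
            rw [hfac, pow_succ]; ring
        _ ≤ ((d+2).factorial:ℝ) * E^(d+2) := by
            apply mul_le_mul
            · exact_mod_cast Nat.factorial_le (by omega)
            · exact pow_le_pow_right₀ hE (by omega)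
            · positivity
            · positivity
    calc |(Y j u : ℝ)| ≤ |if u = j then (A.det:ℝ) else 0|
          + |∑ i, (if cols i = u then (z j i : ℝ) else 0)| := by
          rw [hcast]; exact abs_sub _ _
      _ ≤ F + (ρ:ℝ) * ((ρ:ℝ) * (F * E)) := add_le_add h1 h2
      _ ≤ _ := hfinal
  exact ⟨Y j, fun k => realker j k, hj, hYbound⟩


lemma kernel_eq_span {ι κ : Type*} [Fintype ι] [Fintype κ] (M : Matrix ι κ ℝ)
    (hcard : Fintype.card κ = Fintype.card ι + 1)
    (hLI : LinearIndependent ℝ (fun k => M k)) {v : κ → ℝ} (hv : v ≠ 0)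
    (hvk : M *ᵥ v = 0) {u : κ → ℝ} (hu : M *ᵥ u = 0) : ∃ a : ℝ, u = a • v := by
  classical
  have hrank : M.rank = Fintype.card ι := by
    rw [← Matrix.rank_transpose, Matrix.rank_eq_finrank_span_cols,
      Matrix.col, Matrix.transpose_transpose]
    rw [finrank_span_eq_card hLI]
  have hker : Module.finrank ℝ (LinearMap.ker M.mulVecLin) = 1 := by
    have h1 := LinearMap.finrank_range_add_finrank_ker M.mulVecLin
    simp only [Module.finrank_pi] at h1
    have h2 : Module.finrank ℝ (LinearMap.range M.mulVecLin) = Fintype.card ι := hrank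
    omega
  have hle : (Submodule.span ℝ {v} : Submodule ℝ (κ → ℝ)) ≤ LinearMap.ker M.mulVecLin := by
    rw [Submodule.span_singleton_le_iff_mem, LinearMap.mem_ker, Matrix.mulVecLin_apply]
    exact hvk
  have heq : (Submodule.span ℝ {v} : Submodule ℝ (κ → ℝ)) = LinearMap.ker M.mulVecLin := by
    apply Submodule.eq_of_le_of_finrank_le hle
    rw [hker, finrank_span_singleton hv]
  have humem : u ∈ Submodule.span ℝ ({v} : Set (κ → ℝ)) := by
    rw [heq, LinearMap.mem_ker, Matrix.mulVecLin_apply]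
    exact hu
  obtain ⟨a, ha⟩ := Submodule.mem_span_singleton.mp humem
  exact ⟨a, ha.symm⟩


lemma arith (n r' Scard r : ℕ) (c ε : ℝ) (hc : 0 < c) (hε : 0 < ε)
    (hr : 1 ≤ r) (hr' : r' ≤ r) (hn : r + 3 ≤ n) (hS : (Scard:ℝ) ≤ (n:ℝ)^ε)
    (hSn : Scard ≤ n) (hne : (2:ℝ) ≤ (n:ℝ)^ε) :
    ((r' + Scard : ℕ):ℝ) * ((n:ℝ)^c * (((r' + Scard + 2).factorial : ℝ) *
        ((n:ℝ)^(2*c+1)) ^ (r' + Scard + 2)))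
      ≤ (n:ℝ)^(((3*c+5)*((r:ℝ)+2)) * (n:ℝ)^ε) := by
  have hn4 : (4:ℝ) ≤ (n:ℝ) := by
    have : 4 ≤ n := by omega
    exact_mod_cast this
  have hn1 : (1:ℝ) ≤ (n:ℝ) := by linarith
  have hn0 : (0:ℝ) < (n:ℝ) := by linarith
  set D : ℕ := r' + Scard + 2 with hD
  have hD1 : (1:ℝ) ≤ (D:ℝ) := by
    have : 1 ≤ D := by omega
    exact_mod_cast this
  -- D ≤ n^2 (as reals)
  have hDn2 : (D:ℝ) ≤ (n:ℝ)^(2:ℝ) := by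
    have h1 : D ≤ 2*n := by omega
    have h2 : ((D:ℝ)) ≤ 2*(n:ℝ) := by exact_mod_cast h1
    have h3 : (n:ℝ)^(2:ℝ) = (n:ℝ)*(n:ℝ) := by
      rw [show (2:ℝ) = ((2:ℕ):ℝ) by norm_num, Real.rpow_natCast]; ring
    calc (D:ℝ) ≤ 2*(n:ℝ) := h2
      _ ≤ (n:ℝ)*(n:ℝ) := by nlinarith
      _ = (n:ℝ)^(2:ℝ) := h3.symm
  -- factorial bound
  have hfact : ((D).factorial : ℝ) ≤ (n:ℝ)^(2*(D:ℝ)) := by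
    have h1 : ((D).factorial : ℝ) ≤ ((D:ℝ))^(D:ℕ) := by
      exact_mod_cast Nat.factorial_le_pow D
    have h2 : ((D:ℝ))^(D:ℕ) ≤ ((n:ℝ)^(2:ℝ))^(D:ℕ) := by
      apply pow_le_pow_left₀ (by positivity) hDn2
    have h3 : ((n:ℝ)^(2:ℝ))^(D:ℕ) = (n:ℝ)^(2*(D:ℝ)) := by
      rw [← Real.rpow_natCast ((n:ℝ)^(2:ℝ)) D, ← Real.rpow_mul (le_of_lt hn0)]
    linarith
  have hpow : ((n:ℝ)^(2*c+1)) ^ (D:ℕ) = (n:ℝ)^((2*c+1)*(D:ℝ)) := by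
    rw [← Real.rpow_natCast ((n:ℝ)^(2*c+1)) D, ← Real.rpow_mul (le_of_lt hn0)]
  calc ((r' + Scard : ℕ):ℝ) * ((n:ℝ)^c * (((D).factorial : ℝ) * ((n:ℝ)^(2*c+1)) ^ (D:ℕ)))
      ≤ (n:ℝ)^(2:ℝ) * ((n:ℝ)^c * ((n:ℝ)^(2*(D:ℝ)) * (n:ℝ)^((2*c+1)*(D:ℝ)))) := by
        rw [hpow]
        have hb1 : ((r' + Scard : ℕ):ℝ) ≤ (n:ℝ)^(2:ℝ) := by
          refine le_trans ?_ hDn2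
          have : (r' + Scard : ℕ) ≤ D := by omega
          exact_mod_cast this
        have h0 : (0:ℝ) ≤ (n:ℝ)^((2*c+1)*(D:ℝ)) := by positivity
        have h0' : (0:ℝ) ≤ (n:ℝ)^c := by positivity
        have := mul_le_mul hfact (le_refl ((n:ℝ)^((2*c+1)*(D:ℝ)))) h0 (by positivity)
        have h2 := mul_le_mul (le_refl ((n:ℝ)^c)) this (by positivity) h0'
        exact mul_le_mul hb1 h2 (by positivity) (by positivity)
    _ = (n:ℝ)^(2 + c + 2*(D:ℝ) + (2*c+1)*(D:ℝ)) := by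
        rw [← Real.rpow_add hn0, ← Real.rpow_add hn0, ← Real.rpow_add hn0]
        ring_nf
    _ ≤ (n:ℝ)^(((3*c+5)*((r:ℝ)+2)) * (n:ℝ)^ε) := by
        apply Real.rpow_le_rpow_of_exponent_le hn1
        have hDbound : (D:ℝ) ≤ ((r:ℝ)+2) * (n:ℝ)^ε := by
          have h1 : (D:ℝ) = (r':ℝ) + (Scard:ℝ) + 2 := by push_cast [hD]; ring
          have h2 : (r':ℝ) ≤ (r:ℝ) := by exact_mod_cast hr'
          have h3 : (r:ℝ) + 2 ≤ ((r:ℝ)+1) * (n:ℝ)^ε := by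
            have hr0 : (0:ℝ) ≤ (r:ℝ) := Nat.cast_nonneg r
            nlinarith
          nlinarith [hS]
        have hexp : 2 + c + 2*(D:ℝ) + (2*c+1)*(D:ℝ) ≤ (3*c+5)*(D:ℝ) := by
          nlinarith [hD1, hc.le]
        refine hexp.trans ?_
        calc (3*c+5)*(D:ℝ) ≤ (3*c+5)*(((r:ℝ)+2) * (n:ℝ)^ε) := by
              apply mul_le_mul_of_nonneg_left hDbound (by linarith)
          _ = ((3*c+5)*((r:ℝ)+2)) * (n:ℝ)^ε := by ring

end RatComm

open RatComm

set_option maxHeartbeats 1000000 in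
/-- Rational commensurability: if a nonzero vector `v ∈ ℝ^{n-1}` has all but at most `n^ε`
coordinates in a proper symmetric GAP of rank at most `r` and size at most `n^c`, and `v`
is orthogonal to `n - 2` linearly independent integer vectors with entries bounded by
`n^c`, then all coordinates of `v` are rational multiples `(p/q)·v_{i₀}` of a single
coordinate, with `|p|, |q| ≤ n^{c'·n^ε}`. -/
theorem rational_commensurability (ε : ℝ) (r : ℕ) (c : ℝ)
    (hε0 : 0 < ε) (hε1 : ε < 1) (hr : 1 ≤ r) (hc : 0 < c) :
    ∃ c' : ℝ, 0 < c' ∧ ∃ n₀ : ℕ, ∀ n : ℕ, n₀ ≤ n →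
      ∀ v : Fin (n - 1) → ℝ, v ≠ 0 →
        (∃ Q : Set ℝ, IsProperSymGAPSet Q r ((n : ℝ) ^ c) ∧
          ((Finset.univ.filter fun i => v i ∉ Q).card : ℝ) ≤ (n : ℝ) ^ ε) →
        ∀ w : Fin (n - 2) → Fin (n - 1) → ℤ,
          LinearIndependent ℝ (fun k : Fin (n - 2) => fun j => ((w k j : ℝ))) →
          (∀ k j, |(w k j : ℝ)| ≤ (n : ℝ) ^ c) →
          (∀ k, ∑ j, (w k j : ℝ) * v j = 0) →
          ∃ i₀ : Fin (n - 1), ∀ i, ∃ p q : ℤ, q ≠ 0 ∧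
            |(p : ℝ)| ≤ (n : ℝ) ^ (c' * (n : ℝ) ^ ε) ∧
            |(q : ℝ)| ≤ (n : ℝ) ^ (c' * (n : ℝ) ^ ε) ∧
            v i = ((p : ℝ) / (q : ℝ)) * v i₀ := by
  classical
  refine ⟨(3*c+5)*((r:ℝ)+2), by positivity, r + 3 + 2^(Nat.ceil (1/ε)), ?_⟩
  intro n hn v hv0 hQex w hLI hwb horth
  have hnr3 : r + 3 ≤ n := le_trans (Nat.le_add_right _ _) hn
  have hn4 : 4 ≤ n := by omega
  have hn1 : (1:ℝ) ≤ (n:ℝ) := by exact_mod_cast Nat.one_le_iff_ne_zero.mpr (by omega)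
  have hn0 : (0:ℝ) < (n:ℝ) := by linarith
  have hnc1 : (1:ℝ) ≤ (n:ℝ)^c := by
    rw [show (1:ℝ) = (n:ℝ)^(0:ℝ) by rw [Real.rpow_zero]]
    exact Real.rpow_le_rpow_of_exponent_le hn1 hc.le
  have hne2 : (2:ℝ) ≤ (n:ℝ)^ε := by
    have h1 : (2:ℝ)^((1:ℝ)/ε) ≤ (n:ℝ) := by
      have h2 : ((2^(Nat.ceil (1/ε)) : ℕ) : ℝ) ≤ (n:ℝ) := by
        exact_mod_cast le_trans (Nat.le_add_left _ _) hn
      refine le_trans ?_ h2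
      push_cast
      rw [← Real.rpow_natCast (2:ℝ) (Nat.ceil (1/ε))]
      exact Real.rpow_le_rpow_of_exponent_le one_le_two (Nat.le_ceil _)
    calc (2:ℝ) = ((2:ℝ)^((1:ℝ)/ε))^ε := by
          rw [← Real.rpow_mul (by norm_num), one_div_mul_cancel hε0.ne',
            Real.rpow_one]
      _ ≤ (n:ℝ)^ε := Real.rpow_le_rpow (by positivity) h1 hε0.le
  obtain ⟨Q, ⟨r', g, N, hr'r, hQeq, _hproper, hsize⟩, hScard⟩ := hQex
  have hNb : ∀ t, (N t : ℝ) ≤ (n:ℝ)^c := by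
    intro t
    have hprodone : (1:ℝ) ≤ ∏ i ∈ Finset.univ.erase t, (2*(N i:ℝ)+1) := by
      have hp := Finset.prod_le_prod (s := Finset.univ.erase t)
        (f := fun _ => (1:ℝ)) (g := fun i => 2*(N i:ℝ)+1)
        (fun i _ => zero_le_one)
        (fun i _ => by
          have h0 : (0:ℝ) ≤ (N i:ℝ) := Nat.cast_nonneg _
          show (1:ℝ) ≤ 2*(N i:ℝ)+1
          linarith)
      simpa using hp
    have h1 : (2*(N t:ℝ)+1) ≤ ∏ i, (2*(N i:ℝ)+1) := by
      rw [← Finset.mul_prod_erase Finset.univ _ (Finset.mem_univ t)]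
      have h0 : (0:ℝ) ≤ 2*(N t:ℝ)+1 := by positivity
      exact le_mul_of_one_le_right h0 hprodone
    have h2 := le_trans h1 hsize
    have h3 : (0:ℝ) ≤ (N t:ℝ) := Nat.cast_nonneg _
    linarith
  set S : Finset (Fin (n-1)) := Finset.univ.filter (fun i => v i ∉ Q) with hSdef
  have hmem : ∀ i : Fin (n-1), i ∉ S → ∃ mm : Fin r' → ℤ,
      (∀ t, |mm t| ≤ (N t:ℤ)) ∧ v i = ∑ t, (mm t:ℝ) * g t := by
    intro i hi
    have hQi : v i ∈ Q := by
      by_contra h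
      exact hi (Finset.mem_filter.mpr ⟨Finset.mem_univ _, h⟩)
    rw [hQeq] at hQi
    exact hQi
  set m : Fin (n-1) → Fin r' → ℤ := fun i =>
    if h : i ∉ S then Classical.choose (hmem i h) else fun _ => 0 with hmdef
  have hm1 : ∀ i (h : i ∉ S) (t : Fin r'), |m i t| ≤ (N t:ℤ) := by
    intro i h t
    simp only [hmdef, dif_pos h]
    exact (Classical.choose_spec (hmem i h)).1 t
  have hm2 : ∀ i (h : i ∉ S), v i = ∑ t, (m i t : ℝ) * g t := by
    intro i h
    simp only [hmdef, dif_pos h]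
    exact (Classical.choose_spec (hmem i h)).2
  set B : Matrix (Fin (n-2)) (Fin r' ⊕ {i : Fin (n-1) // i ∈ S}) ℤ := Matrix.of fun k =>
    Sum.elim (fun t => ∑ jj ∈ Sᶜ, w k jj * m jj t)
      (fun (i : {i : Fin (n-1) // i ∈ S}) => w k i.1) with hBdef
  set x : (Fin r' ⊕ {i : Fin (n-1) // i ∈ S}) → ℝ := Sum.elim g (fun i => v i.1) with hxdef
  set φ : Fin (n-1) → (Fin r' ⊕ {i : Fin (n-1) // i ∈ S}) → ℤ := fun i =>
    Sum.elim (fun t => if i ∈ S then 0 else m i t)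
      (fun (j : {i : Fin (n-1) // i ∈ S}) => if j.1 = i then 1 else 0) with hφdef
  have hrepr : ∀ i, v i = ∑ u, ((φ i u : ℤ):ℝ) * x u := by
    intro i
    rw [Fintype.sum_sum_type]
    by_cases hi : i ∈ S
    · have h1 : ∑ t : Fin r', ((φ i (Sum.inl t) : ℤ):ℝ) * x (Sum.inl t) = 0 := by
        apply Finset.sum_eq_zero
        intro t _
        simp [hφdef, hxdef, hi]
      have h2 : ∑ j : {i : Fin (n-1) // i ∈ S},
          ((φ i (Sum.inr j) : ℤ):ℝ) * x (Sum.inr j) = v i := by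
        simp only [hφdef, hxdef, Sum.elim_inr]
        rw [Finset.sum_coe_sort S
          (fun j => (((if j = i then (1:ℤ) else 0) : ℤ):ℝ) * v j)]
        have hc1 : ∀ j ∈ S, (((if j = i then (1:ℤ) else 0) : ℤ):ℝ) * v j
            = if j = i then v j else 0 := by
          intro j _; split <;> simp
        rw [Finset.sum_congr rfl hc1, Finset.sum_ite_eq' S i (fun j => v j),
          if_pos hi]
      rw [h1, h2, zero_add]
    · have h1 : ∑ t : Fin r', ((φ i (Sum.inl t) : ℤ):ℝ) * x (Sum.inl t)
          = ∑ t, (m i t : ℝ) * g t := by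
        apply Finset.sum_congr rfl
        intro t _
        simp [hφdef, hxdef, hi]
      have h2 : ∑ j : {i : Fin (n-1) // i ∈ S},
          ((φ i (Sum.inr j) : ℤ):ℝ) * x (Sum.inr j) = 0 := by
        apply Finset.sum_eq_zero
        intro j _
        have hne : j.1 ≠ i := fun h => hi (h ▸ j.2)
        simp [hφdef, hxdef, hne]
      rw [h1, h2, add_zero, hm2 i hi]
  have hxker : ∀ k, ∑ u, ((B k u : ℤ):ℝ) * x u = 0 := by
    intro k
    rw [Fintype.sum_sum_type]
    have h1 : ∑ t : Fin r', ((B k (Sum.inl t) : ℤ):ℝ) * x (Sum.inl t)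
        = ∑ jj ∈ Sᶜ, (w k jj : ℝ) * v jj := by
      calc ∑ t : Fin r', ((B k (Sum.inl t) : ℤ):ℝ) * x (Sum.inl t)
          = ∑ t : Fin r', ∑ jj ∈ Sᶜ, (w k jj : ℝ) * (m jj t : ℝ) * g t := by
            apply Finset.sum_congr rfl
            intro t _
            simp only [hBdef, hxdef, Matrix.of_apply, Sum.elim_inl]
            push_cast
            rw [Finset.sum_mul]
        _ = ∑ jj ∈ Sᶜ, ∑ t : Fin r', (w k jj : ℝ) * (m jj t : ℝ) * g t :=
            Finset.sum_comm
        _ = ∑ jj ∈ Sᶜ, (w k jj : ℝ) * v jj := by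
            apply Finset.sum_congr rfl
            intro jj hjj
            rw [hm2 jj (Finset.mem_compl.mp hjj), Finset.mul_sum]
            apply Finset.sum_congr rfl
            intro t _
            ring
    have h2 : ∑ j : {i : Fin (n-1) // i ∈ S},
        ((B k (Sum.inr j) : ℤ):ℝ) * x (Sum.inr j)
        = ∑ jj ∈ S, (w k jj : ℝ) * v jj := by
      simp only [hBdef, hxdef, Matrix.of_apply, Sum.elim_inr]
      rw [Finset.sum_coe_sort S (fun j => ((w k j : ℤ):ℝ) * v j)]
    rw [h1, h2, Finset.sum_compl_add_sum S (fun jj => (w k jj : ℝ) * v jj)]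
    exact horth k
  obtain ⟨i₀, hi₀⟩ := Function.ne_iff.mp hv0
  have hvne : v i₀ ≠ 0 := by simpa using hi₀
  have hψx : ∑ u, ((φ i₀ u : ℤ):ℝ) * x u ≠ 0 := by
    rw [← hrepr i₀]; exact hvne
  set E : ℝ := (n:ℝ)^(2*c+1) with hEdef
  have hE1 : (1:ℝ) ≤ E := by
    calc (1:ℝ) = (n:ℝ)^(0:ℝ) := (Real.rpow_zero _).symm
      _ ≤ (n:ℝ)^(2*c+1) := Real.rpow_le_rpow_of_exponent_le hn1 (by linarith)
      _ = E := hEdef.symm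
  have hmb : ∀ i (h : i ∉ S) (t : Fin r'), |((m i t : ℤ):ℝ)| ≤ (n:ℝ)^c := by
    intro i h t
    have h1 : |((m i t : ℤ):ℝ)| ≤ ((N t : ℤ):ℝ) := by
      exact_mod_cast hm1 i h t
    refine h1.trans ?_
    simpa using hNb t
  have hent : ∀ k u, |((B k u : ℤ):ℝ)| ≤ E := by
    intro k u
    match u with
    | Sum.inl t =>
      have h1 : |((B k (Sum.inl t) : ℤ):ℝ)|
          ≤ ∑ jj ∈ Sᶜ, |(w k jj : ℝ)| * |((m jj t : ℤ):ℝ)| := by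
        simp only [hBdef, Matrix.of_apply, Sum.elim_inl]
        push_cast
        refine (Finset.abs_sum_le_sum_abs _ _).trans ?_
        apply Finset.sum_le_sum
        intro jj _
        rw [abs_mul]
      have h2 : ∑ jj ∈ Sᶜ, |(w k jj : ℝ)| * |((m jj t : ℤ):ℝ)|
          ≤ ∑ _jj ∈ Sᶜ, (n:ℝ)^c * (n:ℝ)^c := by
        apply Finset.sum_le_sum
        intro jj hjj
        exact mul_le_mul (hwb k jj) (hmb jj (Finset.mem_compl.mp hjj) t)
          (abs_nonneg _) (by positivity)
      have h3 : ∑ _jj ∈ Sᶜ, (n:ℝ)^c * (n:ℝ)^c ≤ (n:ℝ) * ((n:ℝ)^c * (n:ℝ)^c) := by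
        rw [Finset.sum_const, nsmul_eq_mul]
        apply mul_le_mul_of_nonneg_right _ (by positivity)
        have hcard : (Sᶜ : Finset (Fin (n-1))).card ≤ n := by
          calc (Sᶜ : Finset (Fin (n-1))).card ≤ Fintype.card (Fin (n-1)) :=
                Finset.card_le_univ _
            _ = n - 1 := Fintype.card_fin _
            _ ≤ n := Nat.sub_le _ _
        exact_mod_cast hcard
      have h4 : (n:ℝ) * ((n:ℝ)^c * (n:ℝ)^c) = E := by
        rw [hEdef, show (2*c+1) = c + c + 1 by ring, Real.rpow_add hn0,
          Real.rpow_add hn0, Real.rpow_one]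
        ring
      linarith
    | Sum.inr j =>
      have h1 : |((B k (Sum.inr j) : ℤ):ℝ)| ≤ (n:ℝ)^c := by
        simp only [hBdef, Matrix.of_apply, Sum.elim_inr]
        exact hwb k j.1
      refine h1.trans ?_
      rw [hEdef]
      exact Real.rpow_le_rpow_of_exponent_le hn1 (by linarith)
  obtain ⟨y, hyker, hyψ, hybound⟩ := key B x (φ i₀) E hE1 hent hxker hψx
  set vy : Fin (n-1) → ℝ := fun i => ∑ u, ((φ i u : ℤ):ℝ) * (y u : ℝ) with hvydef
  have hvyker : ∀ k, ∑ i, (w k i : ℝ) * vy i = 0 := by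
    intro k
    have hswap : ∑ i, (w k i : ℝ) * vy i
        = ∑ u, (∑ i, (w k i : ℝ) * ((φ i u : ℤ):ℝ)) * (y u : ℝ) := by
      simp only [hvydef]
      calc ∑ i, (w k i : ℝ) * ∑ u, ((φ i u : ℤ):ℝ) * (y u : ℝ)
          = ∑ i, ∑ u, (w k i : ℝ) * (((φ i u : ℤ):ℝ) * (y u : ℝ)) :=
            Finset.sum_congr rfl fun i _ => Finset.mul_sum _ _ _
        _ = ∑ u, ∑ i, (w k i : ℝ) * (((φ i u : ℤ):ℝ) * (y u : ℝ)) :=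
            Finset.sum_comm
        _ = ∑ u, (∑ i, (w k i : ℝ) * ((φ i u : ℤ):ℝ)) * (y u : ℝ) := by
            refine Finset.sum_congr rfl fun u _ => ?_
            rw [Finset.sum_mul]
            exact Finset.sum_congr rfl fun i _ => by ring
    have hinner : ∀ u, ∑ i, (w k i : ℝ) * ((φ i u : ℤ):ℝ) = ((B k u : ℤ):ℝ) := by
      intro u
      match u with
      | Sum.inl t =>
        have hsplit := Finset.sum_compl_add_sum S
          (fun i => (w k i : ℝ) * ((φ i (Sum.inl t) : ℤ):ℝ))
        have hS0 : ∑ i ∈ S, (w k i : ℝ) * ((φ i (Sum.inl t) : ℤ):ℝ) = 0 := by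
          apply Finset.sum_eq_zero
          intro i hi
          simp [hφdef, hi]
        have hSc : ∑ i ∈ Sᶜ, (w k i : ℝ) * ((φ i (Sum.inl t) : ℤ):ℝ)
            = ∑ i ∈ Sᶜ, (w k i : ℝ) * ((m i t : ℤ):ℝ) := by
          apply Finset.sum_congr rfl
          intro i hi
          have hni : i ∉ S := Finset.mem_compl.mp hi
          simp [hφdef, hni]
        rw [← hsplit, hS0, add_zero, hSc]
        simp only [hBdef, Matrix.of_apply, Sum.elim_inl]
        push_cast
        rfl
      | Sum.inr j =>
        have hc2 : ∀ i, (w k i : ℝ) * (((if j.1 = i then (1:ℤ) else 0) : ℤ):ℝ)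
            = if j.1 = i then (w k i : ℝ) else 0 := by
          intro i; split <;> simp
        calc ∑ i, (w k i : ℝ) * ((φ i (Sum.inr j) : ℤ):ℝ)
            = ∑ i, if j.1 = i then (w k i : ℝ) else 0 := by
              refine Finset.sum_congr rfl fun i _ => ?_
              rw [show φ i (Sum.inr j) = (if j.1 = i then (1:ℤ) else 0) from rfl]
              exact hc2 i
          _ = (w k j.1 : ℝ) := by
              rw [Finset.sum_ite_eq Finset.univ j.1 (fun i => (w k i:ℝ))]
              simp
          _ = ((B k (Sum.inr j) : ℤ):ℝ) := by
              simp [hBdef]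
    rw [hswap, Finset.sum_congr rfl (fun u _ => by rw [hinner u])]
    exact hyker k
  set M : Matrix (Fin (n-2)) (Fin (n-1)) ℝ := Matrix.of fun k j => (w k j : ℝ)
    with hMdef
  have hcard : Fintype.card (Fin (n-1)) = Fintype.card (Fin (n-2)) + 1 := by
    rw [Fintype.card_fin, Fintype.card_fin]
    omega
  have hMv : M *ᵥ v = 0 := by
    funext k
    simpa [hMdef, Matrix.mulVec, dotProduct] using horth k
  have hMvy : M *ᵥ vy = 0 := by
    funext k
    simpa [hMdef, Matrix.mulVec, dotProduct] using hvyker k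
  have hLI' : LinearIndependent ℝ (fun k => M k) := hLI
  obtain ⟨a, ha⟩ := kernel_eq_span M hcard hLI' hv0 hMv hMvy
  -- bounds for all the integer pairings
  have hbound : ∀ (i' : Fin (n-1)), |((∑ u, φ i' u * y u : ℤ):ℝ)|
      ≤ (n:ℝ)^((3*c+5)*((r:ℝ)+2) * (n:ℝ)^ε) := by
    intro i'
    have hφb : ∀ u, |((φ i' u : ℤ):ℝ)| ≤ (n:ℝ)^c := by
      intro u
      match u with
      | Sum.inl t =>
        by_cases hi : i' ∈ S
        · have : φ i' (Sum.inl t) = 0 := by simp [hφdef, hi]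
          rw [this]
          simpa using le_trans zero_le_one hnc1
        · have : φ i' (Sum.inl t) = m i' t := by simp [hφdef, hi]
          rw [this]
          exact hmb i' hi t
      | Sum.inr j =>
        have : φ i' (Sum.inr j) = (if j.1 = i' then 1 else 0) := rfl
        rw [this]
        split
        · simpa using hnc1
        · simpa using le_trans zero_le_one hnc1
    have hcd : Fintype.card (Fin r' ⊕ {i : Fin (n-1) // i ∈ S}) = r' + S.card := by
      simp [Fintype.card_sum, Fintype.card_coe]
    have hSn : S.card ≤ n := by
      calc S.card ≤ Fintype.card (Fin (n-1)) := Finset.card_le_univ _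
        _ = n - 1 := Fintype.card_fin _
        _ ≤ n := Nat.sub_le _ _
    have hSr : (S.card : ℝ) ≤ (n:ℝ)^ε := hScard
    calc |((∑ u, φ i' u * y u : ℤ):ℝ)|
        = |∑ u, ((φ i' u:ℤ):ℝ) * (y u:ℝ)| := by push_cast; rfl
      _ ≤ ∑ u, |((φ i' u:ℤ):ℝ) * (y u:ℝ)| := Finset.abs_sum_le_sum_abs _ _
      _ ≤ ∑ _u : (Fin r' ⊕ {i : Fin (n-1) // i ∈ S}), (n:ℝ)^c * (((Fintype.card (Fin r' ⊕ {i : Fin (n-1) // i ∈ S}) + 2).factorial : ℝ)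
            * E ^ (Fintype.card (Fin r' ⊕ {i : Fin (n-1) // i ∈ S}) + 2)) := by
          refine Finset.sum_le_sum fun u _ => ?_
          rw [abs_mul]
          exact mul_le_mul (hφb u) (hybound u) (abs_nonneg _) (by positivity)
      _ = (Fintype.card (Fin r' ⊕ {i : Fin (n-1) // i ∈ S}) : ℝ) * ((n:ℝ)^c * (((Fintype.card (Fin r' ⊕ {i : Fin (n-1) // i ∈ S}) + 2).factorial : ℝ)
            * E ^ (Fintype.card (Fin r' ⊕ {i : Fin (n-1) // i ∈ S}) + 2))) := by
          rw [Finset.sum_const, Finset.card_univ, nsmul_eq_mul]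
      _ ≤ (n:ℝ)^((3*c+5)*((r:ℝ)+2) * (n:ℝ)^ε) := by
          rw [hcd, hEdef]
          exact_mod_cast arith n r' S.card r c ε hc hε0 hr hr'r hnr3 hSr hSn hne2
  -- conclusion
  set q : ℤ := ∑ u, φ i₀ u * y u with hqdef
  have hqcast : (q:ℝ) = ∑ u, ((φ i₀ u : ℤ):ℝ) * (y u : ℝ) := by
    rw [hqdef]; push_cast; rfl
  have hqR : (q:ℝ) ≠ 0 := by rw [hqcast]; exact hyψ
  have hq0 : q ≠ 0 := fun h => hqR (by rw [h, Int.cast_zero])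
  have hqvy : (q:ℝ) = a * v i₀ := by
    rw [hqcast]
    have h1 : vy i₀ = a * v i₀ := by rw [ha]; simp
    rw [← h1]
  have ha0 : a ≠ 0 := by
    intro h
    apply hqR
    rw [hqvy, h, zero_mul]
  refine ⟨i₀, fun i => ?_⟩
  refine ⟨∑ u, φ i u * y u, q, hq0, hbound i, hbound i₀, ?_⟩
  have hpcast : ((∑ u, φ i u * y u : ℤ):ℝ) = ∑ u, ((φ i u : ℤ):ℝ) * (y u : ℝ) := by
    push_cast; rfl
  have hpvy : ((∑ u, φ i u * y u : ℤ):ℝ) = a * v i := by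
    rw [hpcast]
    have h1 : vy i = a * v i := by rw [ha]; simp
    rw [← h1]
  have hdivq : ((∑ u, φ i u * y u : ℤ):ℝ) / (q:ℝ) = v i / v i₀ := by
    rw [hpvy, hqvy, mul_div_mul_left _ _ ha0]
  rw [hdivq, div_mul_cancel₀ _ hvne]

end
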